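/- arXiv:2405.14073 — 4 statements merged into one kernel-verified Lean document; each statement's English description precedes it below -/
import Mathlib

section
/- Let ι be a finite nonempty type, let p and q be positive probability vectors on ι, and let β > 0. Then ⨅ (r : ι → ℝ), ⨆ (p' : positive probability vector on ι), (∑ i, p' i * r i − ∑ i, p i * r i − β * ∑ i, p' i * Real.log (p' i / q i)) = −β * ∑ i, p i * Real.log (p i / q i). That is, the min–max value of the fine-tuning objective, minimized over all reward functions r and maximized over all fine-tuned trajectory distributions p', equals −β · KL(p ‖ q). (Core min–max identity of Theorem 1 for a fixed embodiment.) -/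
/-!
Against the reward `r = β log (p / q)` the objective at `p'` equals
`-β KL(p ‖ q) - β KL(p' ‖ p)`, so by Gibbs' inequality no `p'` beats `-β KL(p ‖ q)`; conversely,
for every reward `r` the choice `p' = p` cancels the reward terms and already attains that value.
Hence `(β log (p / q), p)` is a saddle point of the objective.
-/

open Finset Real Set

section Saddle

variable {α β γ : Type*} [ConditionallyCompleteLattice γ]

theorem ciInf_ciSup_eq_of_saddle {F : α → β → γ} {c : γ}
    (hbdd : ∀ a, BddAbove (range (F a))) (b₀ : β) (hle : ∀ a, c ≤ F a b₀)
    (a₀ : α) (hge : ∀ b, F a₀ b ≤ c) :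
    ⨅ a, ⨆ b, F a b = c := by
  have : Nonempty α := ⟨a₀⟩
  have : Nonempty β := ⟨b₀⟩
  have hc_le : ∀ a, c ≤ ⨆ b, F a b := fun a => le_ciSup_of_le (hbdd a) b₀ (hle a)
  refine le_antisymm ?_ (le_ciInf hc_le)
  exact ciInf_le_of_le ⟨c, forall_mem_range.2 hc_le⟩ a₀ (ciSup_le hge)

end Saddle

theorem sub_le_mul_log_div {a b : ℝ} (ha : 0 ≤ a) (hb : 0 < b) : a - b ≤ a * log (a / b) := by
  rcases ha.eq_or_lt with rfl | ha
  · simpa using hb.le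
  have h := one_sub_inv_le_log_of_pos (div_pos ha hb)
  rw [inv_div] at h
  calc a - b = a * (1 - b / a) := by field_simp
    _ ≤ a * log (a / b) := mul_le_mul_of_nonneg_left h ha.le

section KL

variable {ι : Type*} {s : Finset ι} {a b : ι → ℝ}

theorem sum_sub_sum_le_sum_mul_log_div (ha : ∀ i ∈ s, 0 ≤ a i) (hb : ∀ i ∈ s, 0 < b i) :
    ∑ i ∈ s, a i - ∑ i ∈ s, b i ≤ ∑ i ∈ s, a i * log (a i / b i) := by
  rw [← sum_sub_distrib]
  exact sum_le_sum fun i hi => sub_le_mul_log_div (ha i hi) (hb i hi)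

theorem sum_mul_log_div_nonneg (ha : ∀ i ∈ s, 0 ≤ a i) (hb : ∀ i ∈ s, 0 < b i)
    (hab : ∑ i ∈ s, a i = ∑ i ∈ s, b i) :
    0 ≤ ∑ i ∈ s, a i * log (a i / b i) := by
  simpa [hab] using sum_sub_sum_le_sum_mul_log_div ha hb

theorem sum_mul_log_div_eq_add (ha : ∀ i ∈ s, a i ≠ 0) (hb : ∀ i ∈ s, b i ≠ 0) {c : ι → ℝ}
    (hc : ∀ i ∈ s, c i ≠ 0) :
    ∑ i ∈ s, a i * log (a i / c i)
      = ∑ i ∈ s, a i * log (a i / b i) + ∑ i ∈ s, a i * log (b i / c i) := by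
  rw [← sum_add_distrib]
  refine sum_congr rfl fun i hi => ?_
  rw [log_div (ha i hi) (hc i hi), log_div (ha i hi) (hb i hi), log_div (hb i hi) (hc i hi)]
  ring

theorem sum_mul_le_sum_abs (ha : ∀ i ∈ s, 0 ≤ a i) (has : ∑ i ∈ s, a i = 1) (r : ι → ℝ) :
    ∑ i ∈ s, a i * r i ≤ ∑ i ∈ s, |r i| := by
  refine sum_le_sum fun i hi => ?_
  have ha_le : a i ≤ 1 := has ▸ single_le_sum ha hi
  calc a i * r i ≤ a i * |r i| := mul_le_mul_of_nonneg_left (le_abs_self _) (ha i hi)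
    _ ≤ |r i| := mul_le_of_le_one_left (abs_nonneg _) ha_le

end KL

section Objective

variable {ι : Type*} [Fintype ι]

noncomputable def fineTuneObjective (p q : ι → ℝ) (β : ℝ) (r p' : ι → ℝ) : ℝ :=
  ∑ i, p' i * r i - ∑ i, p i * r i - β * ∑ i, p' i * log (p' i / q i)

variable {p q p' : ι → ℝ} {β : ℝ}

theorem fineTuneObjective_self (r : ι → ℝ) :
    fineTuneObjective p q β r p = -β * ∑ i, p i * log (p i / q i) := by
  unfold fineTuneObjective; ring

theorem fineTuneObjective_le (hq : ∀ i, 0 < q i) (hβ : 0 ≤ β) (r : ι → ℝ)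
    (hp' : ∀ i, 0 ≤ p' i) (hp's : ∑ i, p' i = 1) :
    fineTuneObjective p q β r p' ≤ ∑ i, |r i| - ∑ i, p i * r i + β * (∑ i, q i - 1) := by
  have hr := sum_mul_le_sum_abs (fun i _ => hp' i) hp's r
  have hkl := sum_sub_sum_le_sum_mul_log_div (s := univ) (fun i _ => hp' i) (fun i _ => hq i)
  rw [hp's] at hkl
  unfold fineTuneObjective
  linarith [mul_le_mul_of_nonneg_left hkl hβ]

theorem fineTuneObjective_logRatio (hp : ∀ i, 0 < p i) (hq : ∀ i, 0 < q i)
    (hp' : ∀ i, 0 < p' i) :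
    fineTuneObjective p q β (fun i => β * log (p i / q i)) p'
      = -β * ∑ i, p i * log (p i / q i) - β * ∑ i, p' i * log (p' i / p i) := by
  unfold fineTuneObjective
  rw [sum_mul_log_div_eq_add (fun i _ => (hp' i).ne') (fun i _ => (hp i).ne')
    (fun i _ => (hq i).ne')]
  simp only [mul_left_comm _ β, ← mul_sum]
  ring

end Objective

theorem minmax_finetune_eq_neg_KL_general {ι : Type*} [Fintype ι]
    (p q : ι → ℝ) (hp : ∀ i, 0 < p i) (hps : ∑ i, p i = 1)
    (hq : ∀ i, 0 < q i)
    (β : ℝ) (hβ : 0 < β) :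
    (⨅ r : ι → ℝ, ⨆ p' : {f : ι → ℝ // (∀ i, 0 < f i) ∧ ∑ i, f i = 1},
      (∑ i, (p' : ι → ℝ) i * r i - ∑ i, p i * r i
        - β * ∑ i, (p' : ι → ℝ) i * Real.log ((p' : ι → ℝ) i / q i)))
    = -β * ∑ i, p i * Real.log (p i / q i) := by
  let S := {f : ι → ℝ // (∀ i, 0 < f i) ∧ ∑ i, f i = 1}
  have hbdd (r : ι → ℝ) : BddAbove (range fun p' : S => fineTuneObjective p q β r p'.1) :=
    ⟨_, forall_mem_range.2 fun p' =>
      fineTuneObjective_le hq hβ.le r (fun i => (p'.2.1 i).le) p'.2.2⟩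
  have hsaddle (p' : S) :
      fineTuneObjective p q β (fun i => β * log (p i / q i)) p'.1
        ≤ -β * ∑ i, p i * log (p i / q i) := by
    obtain ⟨p', hp', hp's⟩ := p'
    rw [fineTuneObjective_logRatio hp hq hp']
    have hgibbs := sum_mul_log_div_nonneg (s := univ) (fun i _ => (hp' i).le)
      (fun i _ => hp i) (hp's.trans hps.symm)
    linarith [mul_nonneg hβ.le hgibbs]
  exact ciInf_ciSup_eq_of_saddle hbdd ⟨p, hp, hps⟩ (fun r => (fineTuneObjective_self r).ge) _
    hsaddle

/-- Core min–max identity of Theorem 1 for a fixed embodiment: the min over reward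
functions of the max over positive probability vectors `p'` of the fine-tuning
objective equals `−β · KL(p‖q)`. -/
theorem minmax_finetune_eq_neg_KL {ι : Type*} [Fintype ι] [Nonempty ι]
    (p q : ι → ℝ) (hp : ∀ i, 0 < p i) (hps : ∑ i, p i = 1)
    (hq : ∀ i, 0 < q i) (hqs : ∑ i, q i = 1)
    (β : ℝ) (hβ : 0 < β) :
    (⨅ r : ι → ℝ, ⨆ p' : {f : ι → ℝ // (∀ i, 0 < f i) ∧ ∑ i, f i = 1},
      (∑ i, (p' : ι → ℝ) i * r i - ∑ i, p i * r i
        - β * ∑ i, (p' : ι → ℝ) i * Real.log ((p' : ι → ℝ) i / q i)))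
    = -β * ∑ i, p i * Real.log (p i / q i) :=
  minmax_finetune_eq_neg_KL_general p q hp hps hq β hβ
end

section
/- (Theorem 1, finite form.) Let E and T be finite nonempty types, let w : E → ℝ be a positive probability vector, let p : E → T → ℝ be such that p e is a positive probability vector on T for every e, let β > 0, and define p̄ t := ∑ e, w e * p e t and post e t := w e * p e t / p̄ t. Then ∑ e, w e * (⨅ (r : T → ℝ), ⨆ (p' : positive probability vector on T), (∑ t, p' t * r t − ∑ t, p e t * r t − β * ∑ t, p' t * Real.log (p' t / p̄ t))) = −β * ∑ e, w e * ∑ t, p e t * Real.log (p e t / p̄ t) = β * ∑ e, w e * ∑ t, p e t * Real.log (w e / post e t). That is, the cross-embodiment pre-training objective U(π, E) equals −β · E_e[KL(p_e ‖ p̄)] = β · E_e E_{τ∼p_e}[log (w(e) / post(e|τ))]. -/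
/-!
For each embodiment `e`, the inner supremum over `p'` is a Gibbs variational problem: by
`log x ≤ x - 1`, `∑ p' r - β KL(p' ‖ q) ≤ β (∑ q exp (r / β) - 1)`. Taking `p' = p e` shows the
min–max value is at least `-β KL(p e ‖ p̄)` for every `r`, and the reward
`r = β log (p e / p̄)` makes the bound equal to this value. The second equality is the
pointwise identity `w e / post e t = p̄ t / p e t`.
-/

open Finset Real

section

variable {T : Type*} [Fintype T]

noncomputable def finKLDiv (p q : T → ℝ) : ℝ := ∑ t, p t * log (p t / q t)

abbrev PosProbVec (T : Type*) [Fintype T] : Type _ :=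
  {f : T → ℝ // (∀ t, 0 < f t) ∧ ∑ t, f t = 1}

lemma sum_mul_log_div_le_sum_sub_one {f g : T → ℝ} (hf : ∀ t, 0 < f t) (hg : ∀ t, 0 < g t)
    (hfs : ∑ t, f t = 1) :
    ∑ t, f t * log (g t / f t) ≤ ∑ t, g t - 1 := by
  rw [← hfs, ← sum_sub_distrib]
  refine sum_le_sum fun t _ => ?_
  calc f t * log (g t / f t) ≤ f t * (g t / f t - 1) :=
        mul_le_mul_of_nonneg_left (log_le_sub_one_of_pos (div_pos (hg t) (hf t))) (hf t).le
    _ = g t - f t := by field_simp [(hf t).ne']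

lemma sum_mul_sub_mul_finKLDiv_le {β : ℝ} (hβ : 0 < β) {q : T → ℝ} (hq : ∀ t, 0 < q t)
    (p' : PosProbVec T) (r : T → ℝ) :
    ∑ t, p'.1 t * r t - β * finKLDiv p'.1 q ≤ β * (∑ t, q t * exp (r t / β) - 1) := by
  obtain ⟨p', hp', hp's⟩ := p'
  have hgibbs := sum_mul_log_div_le_sum_sub_one hp'
    (fun t => mul_pos (hq t) (exp_pos (r t / β))) hp's
  have hlog : ∑ t, p' t * log (q t * exp (r t / β) / p' t)
      = (∑ t, p' t * r t) / β - finKLDiv p' q := by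
    rw [finKLDiv, sum_div, ← sum_sub_distrib]
    refine sum_congr rfl fun t _ => ?_
    rw [log_div (mul_pos (hq t) (exp_pos _)).ne' (hp' t).ne', log_mul (hq t).ne' (exp_pos _).ne',
      log_exp, log_div (hp' t).ne' (hq t).ne']
    ring
  rw [hlog] at hgibbs
  calc ∑ t, p' t * r t - β * finKLDiv p' q
      = β * ((∑ t, p' t * r t) / β - finKLDiv p' q) := by field_simp
    _ ≤ β * (∑ t, q t * exp (r t / β) - 1) := mul_le_mul_of_nonneg_left hgibbs hβ.le

lemma iInf_iSup_sum_mul_sub_finKLDiv {β : ℝ} (hβ : 0 < β) {q : T → ℝ} (hq : ∀ t, 0 < q t)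
    (p : PosProbVec T) :
    ⨅ r : T → ℝ, ⨆ p' : PosProbVec T,
        (∑ t, p'.1 t * r t - ∑ t, p.1 t * r t - β * finKLDiv p'.1 q)
      = -β * finKLDiv p.1 q := by
  obtain ⟨p, hp, hps⟩ := p
  have : Nonempty (PosProbVec T) := ⟨⟨p, hp, hps⟩⟩
  set F : (T → ℝ) → PosProbVec T → ℝ :=
    fun r p' => ∑ t, p'.1 t * r t - ∑ t, p t * r t - β * finKLDiv p'.1 q
  have hF_le (r : T → ℝ) (p' : PosProbVec T) :
      F r p' ≤ β * (∑ t, q t * exp (r t / β) - 1) - ∑ t, p t * r t := by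
    have := sum_mul_sub_mul_finKLDiv_le hβ hq p' r
    simp only [F]
    linarith
  have hbdd (r : T → ℝ) : BddAbove (Set.range (F r)) :=
    ⟨_, Set.forall_mem_range.2 (hF_le r)⟩
  have hle_iSup (r : T → ℝ) : -β * finKLDiv p q ≤ ⨆ p', F r p' :=
    le_ciSup_of_le (hbdd r) ⟨p, hp, hps⟩ (le_of_eq (by simp only [F]; ring))
  -- the optimal reward makes `p` the Gibbs tilt `q * exp (r / β)` of `q`
  set rStar : T → ℝ := fun t => β * log (p t / q t)
  have hpartition : ∑ t, q t * exp (rStar t / β) = 1 := by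
    rw [← hps]
    refine sum_congr rfl fun t _ => ?_
    rw [mul_div_cancel_left₀ _ hβ.ne', exp_log (div_pos (hp t) (hq t)),
      mul_div_cancel₀ _ (hq t).ne']
  have hreward : ∑ t, p t * rStar t = β * finKLDiv p q := by
    rw [finKLDiv, mul_sum]
    exact sum_congr rfl fun t _ => by ring
  have hiSup_le : ⨆ p', F rStar p' ≤ -β * finKLDiv p q :=
    ciSup_le fun p' => by
      have := hF_le rStar p'
      rw [hpartition, hreward] at this
      linarith
  exact le_antisymm (ciInf_le_of_le ⟨_, Set.forall_mem_range.2 hle_iSup⟩ rStar hiSup_le)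
    (le_ciInf hle_iSup)

lemma sum_mul_log_div_mul_div_eq_neg_finKLDiv {a : ℝ} (ha : a ≠ 0) {p q : T → ℝ} (hp : ∀ t, 0 < p t)
    (hq : ∀ t, 0 < q t) :
    ∑ t, p t * log (a / (a * p t / q t)) = -finKLDiv p q := by
  rw [finKLDiv, ← sum_neg_distrib]
  refine sum_congr rfl fun t _ => ?_
  rw [div_div_eq_mul_div, mul_div_mul_left _ _ ha, log_div (hq t).ne' (hp t).ne',
    log_div (hp t).ne' (hq t).ne']
  ring

end

theorem theorem1_finite_general {E T : Type*}
    [Fintype E] [Fintype T]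
    (w : E → ℝ) (hw : ∀ e, 0 < w e)
    (p : E → T → ℝ) (hp : ∀ e t, 0 < p e t) (hps : ∀ e, ∑ t, p e t = 1)
    (β : ℝ) (hβ : 0 < β)
    (pbar : T → ℝ) (hpbar : ∀ t, pbar t = ∑ e, w e * p e t)
    (post : E → T → ℝ) (hpost : ∀ e t, post e t = w e * p e t / pbar t) :
    (∑ e, w e *
      (⨅ r : T → ℝ, ⨆ p' : {f : T → ℝ // (∀ t, 0 < f t) ∧ ∑ t, f t = 1},
        (∑ t, (p' : T → ℝ) t * r t - ∑ t, p e t * r t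
          - β * ∑ t, (p' : T → ℝ) t * Real.log ((p' : T → ℝ) t / pbar t)))
      = -β * ∑ e, w e * ∑ t, p e t * Real.log (p e t / pbar t)) ∧
    (-β * ∑ e, w e * ∑ t, p e t * Real.log (p e t / pbar t)
      = β * ∑ e, w e * ∑ t, p e t * Real.log (w e / post e t)) := by
  have hpbar_pos (e : E) (t : T) : 0 < pbar t :=
    hpbar t ▸ (mul_pos (hw e) (hp e t)).trans_le
      (single_le_sum (fun e _ => (mul_pos (hw e) (hp e t)).le) (mem_univ e))
  have hvalue (e : E) := iInf_iSup_sum_mul_sub_finKLDiv hβ (hpbar_pos e) ⟨p e, hp e, hps e⟩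
  have hposterior (e : E) : ∑ t, p e t * log (w e / post e t) = -finKLDiv (p e) pbar := by
    simp only [hpost]
    exact sum_mul_log_div_mul_div_eq_neg_finKLDiv (hw e).ne' (hp e) (hpbar_pos e)
  constructor
  · refine (sum_congr rfl fun e _ => congrArg (w e * ·) (hvalue e)).trans ?_
    change _ = -β * ∑ e, w e * finKLDiv (p e) pbar
    rw [mul_sum]
    exact sum_congr rfl fun e _ => by ring
  · change -β * ∑ e, w e * finKLDiv (p e) pbar = _
    simp only [hposterior, mul_sum]
    exact sum_congr rfl fun e _ => by ring

/-- Theorem 1, finite form: the cross-embodiment pre-training objective equals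
`−β · E_e[KL(p_e ‖ p̄)]`, which equals `β · E_e E_{τ∼p_e}[log(w(e)/post(e|τ))]`. -/
theorem theorem1_finite {E T : Type*}
    [Fintype E] [Nonempty E] [Fintype T] [Nonempty T]
    (w : E → ℝ) (hw : ∀ e, 0 < w e) (hws : ∑ e, w e = 1)
    (p : E → T → ℝ) (hp : ∀ e t, 0 < p e t) (hps : ∀ e, ∑ t, p e t = 1)
    (β : ℝ) (hβ : 0 < β)
    (pbar : T → ℝ) (hpbar : ∀ t, pbar t = ∑ e, w e * p e t)
    (post : E → T → ℝ) (hpost : ∀ e t, post e t = w e * p e t / pbar t) :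
    (∑ e, w e *
      (⨅ r : T → ℝ, ⨆ p' : {f : T → ℝ // (∀ t, 0 < f t) ∧ ∑ t, f t = 1},
        (∑ t, (p' : T → ℝ) t * r t - ∑ t, p e t * r t
          - β * ∑ t, (p' : T → ℝ) t * Real.log ((p' : T → ℝ) t / pbar t)))
      = -β * ∑ e, w e * ∑ t, p e t * Real.log (p e t / pbar t)) ∧
    (-β * ∑ e, w e * ∑ t, p e t * Real.log (p e t / pbar t)
      = β * ∑ e, w e * ∑ t, p e t * Real.log (w e / post e t)) :=
  theorem1_finite_general w hw p hp hps β hβ pbar hpbar post hpost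
end

section
/- (Averaged skill min–max, Eq. (7) first part.) Let E, Z, and T be finite nonempty types, let w : E → ℝ be a positive probability vector, let P : E → Z → T → ℝ be such that P e z is a positive probability vector on T for all e, z, let p̄ be a positive probability vector on T, and let β > 0. Then ∑ e, w e * (⨅ (r : T → ℝ), ⨆ (p' : positive probability vector on T), (∑ t, p' t * r t − (⨆ z, ∑ t, P e z t * r t) − β * ∑ t, p' t * Real.log (p' t / p̄ t))) = −β * ∑ e, w e * ⨆ z, ∑ t, P e z t * Real.log (P e z t / p̄ t). -/
/-!
For a fixed embodiment the min–max value is `-β · max_z KL(P z ‖ p̄)`; averaging is then linear.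
Choosing `p' = P z` for a skill `z` attaining `max_z ⟨P z, r⟩` shows that every reward `r`
leaves the adversary at least `-β · KL(P z ‖ p̄)`. Conversely, for the skill `z₀` of maximal
divergence the reward `r₀ = β log (P z₀ / p̄)` turns the objective into
`-β · KL(p' ‖ P z₀) - max_z ⟨P z, r₀⟩`, and Gibbs' inequality together with
`max_z ⟨P z, r₀⟩ ≥ ⟨P z₀, r₀⟩ = β · KL(P z₀ ‖ p̄)` bounds it by `-β · KL(P z₀ ‖ p̄)`.
-/

open Finset Real

section

variable {T : Type*} [Fintype T]

noncomputable def finKL (p q : T → ℝ) : ℝ := ∑ t, p t * log (p t / q t)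

/-- Gibbs' inequality for unnormalised positive weights. -/
theorem sum_sub_sum_le_finKL {p q : T → ℝ} (hp : ∀ t, 0 < p t) (hq : ∀ t, 0 < q t) :
    ∑ t, p t - ∑ t, q t ≤ finKL p q := by
  rw [← sum_sub_distrib]
  refine sum_le_sum fun t _ => ?_
  have hlog := one_sub_inv_le_log_of_pos (div_pos (hp t) (hq t))
  rw [inv_div] at hlog
  calc p t - q t = p t * (1 - q t / p t) := by
        rw [mul_sub, mul_div_cancel₀ _ (hp t).ne', mul_one]
    _ ≤ p t * log (p t / q t) := mul_le_mul_of_nonneg_left hlog (hp t).le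

theorem finKL_nonneg {p q : PosProbVec T} : 0 ≤ finKL (p : T → ℝ) q := by
  simpa [p.2.2, q.2.2] using sum_sub_sum_le_finKL p.2.1 q.2.1

theorem sum_mul_log_div_sub_finKL {p q pbar : T → ℝ} (hp : ∀ t, 0 < p t) (hq : ∀ t, 0 < q t)
    (hpbar : ∀ t, 0 < pbar t) (β : ℝ) :
    ∑ t, p t * (β * log (q t / pbar t)) - β * finKL p pbar = -β * finKL p q := by
  simp only [finKL, mul_sum, ← sum_sub_distrib]
  refine sum_congr rfl fun t _ => ?_
  rw [log_div (hq t).ne' (hpbar t).ne', log_div (hp t).ne' (hpbar t).ne',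
    log_div (hp t).ne' (hq t).ne']
  ring

variable {Z : Type*}

/-- The adversary's payoff for the reward `r` and the response `p`. -/
noncomputable def skillObjective (Q : Z → T → ℝ) (pbar : T → ℝ) (β : ℝ) (r p : T → ℝ) : ℝ :=
  ∑ t, p t * r t - (⨆ z, ∑ t, Q z t * r t) - β * finKL p pbar

variable {Q : Z → T → ℝ} {pbar : T → ℝ} {β : ℝ}

theorem skillObjective_le (hpbar : ∀ t, 0 < pbar t) (hβ : 0 ≤ β) (r : T → ℝ)
    (p : PosProbVec T) :
    skillObjective Q pbar β r p
      ≤ (⨆ t, r t) - (⨆ z, ∑ t, Q z t * r t) + β * (∑ t, pbar t - 1) := by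
  have hinner : ∑ t, (p : T → ℝ) t * r t ≤ ⨆ t, r t :=
    calc ∑ t, (p : T → ℝ) t * r t ≤ ∑ t, (p : T → ℝ) t * ⨆ t, r t :=
          sum_le_sum fun t _ => mul_le_mul_of_nonneg_left
            (le_ciSup (Set.finite_range r).bddAbove t) (p.2.1 t).le
      _ = ⨆ t, r t := by rw [← sum_mul, p.2.2, one_mul]
  have hKL := sum_sub_sum_le_finKL p.2.1 hpbar
  rw [p.2.2] at hKL
  unfold skillObjective
  nlinarith

theorem bddAbove_range_skillObjective (hpbar : ∀ t, 0 < pbar t) (hβ : 0 ≤ β) (r : T → ℝ) :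
    BddAbove (Set.range fun p : PosProbVec T => skillObjective Q pbar β r p) :=
  ⟨_, Set.forall_mem_range.2 (skillObjective_le hpbar hβ r)⟩

theorem neg_mul_iSup_finKL_le_iSup_skillObjective [Finite Z] [Nonempty Z]
    (hQ : ∀ z t, 0 < Q z t) (hQs : ∀ z, ∑ t, Q z t = 1)
    (hpbar : ∀ t, 0 < pbar t) (hβ : 0 ≤ β) (r : T → ℝ) :
    -β * ⨆ z, finKL (Q z) pbar ≤ ⨆ p : PosProbVec T, skillObjective Q pbar β r p := by
  obtain ⟨z, hz⟩ := exists_eq_ciSup_of_finite (f := fun z => ∑ t, Q z t * r t)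
  have hval : skillObjective Q pbar β r (Q z) = -β * finKL (Q z) pbar := by
    rw [skillObjective, ← hz]
    ring
  calc -β * ⨆ z, finKL (Q z) pbar ≤ -β * finKL (Q z) pbar :=
        mul_le_mul_of_nonpos_left
          (le_ciSup (f := fun z => finKL (Q z) pbar) (Set.finite_range _).bddAbove z) (by linarith)
    _ = skillObjective Q pbar β r (Q z) := hval.symm
    _ ≤ ⨆ p : PosProbVec T, skillObjective Q pbar β r p :=
        le_ciSup (bddAbove_range_skillObjective hpbar hβ r) ⟨Q z, hQ z, hQs z⟩

theorem iSup_skillObjective_log_div_le [Finite Z] {z₀ : Z} (hQ₀ : ∀ t, 0 < Q z₀ t)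
    (hQs₀ : ∑ t, Q z₀ t = 1) (hpbar : ∀ t, 0 < pbar t) (hβ : 0 ≤ β) :
    ⨆ p : PosProbVec T, skillObjective Q pbar β (fun t => β * log (Q z₀ t / pbar t)) p
      ≤ -β * finKL (Q z₀) pbar := by
  have : Nonempty (PosProbVec T) := ⟨⟨Q z₀, hQ₀, hQs₀⟩⟩
  set r₀ : T → ℝ := fun t => β * log (Q z₀ t / pbar t)
  have hz₀ : β * finKL (Q z₀) pbar ≤ ⨆ z, ∑ t, Q z t * r₀ t := by
    have hval : ∑ t, Q z₀ t * r₀ t = β * finKL (Q z₀) pbar := by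
      simp only [r₀, finKL, mul_sum]
      exact sum_congr rfl fun t _ => by ring
    exact hval ▸ le_ciSup (f := fun z => ∑ t, Q z t * r₀ t) (Set.finite_range _).bddAbove z₀
  refine ciSup_le fun p => ?_
  have hgap := sum_mul_log_div_sub_finKL p.2.1 hQ₀ hpbar β
  have hKL : 0 ≤ β * finKL (p : T → ℝ) (Q z₀) :=
    mul_nonneg hβ (finKL_nonneg (q := ⟨Q z₀, hQ₀, hQs₀⟩))
  unfold skillObjective
  linarith

theorem iInf_iSup_skillObjective [Finite Z] [Nonempty Z] (hQ : ∀ z t, 0 < Q z t)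
    (hQs : ∀ z, ∑ t, Q z t = 1) (hpbar : ∀ t, 0 < pbar t) (hβ : 0 ≤ β) :
    ⨅ r : T → ℝ, ⨆ p : PosProbVec T, skillObjective Q pbar β r p
      = -β * ⨆ z, finKL (Q z) pbar := by
  obtain ⟨z₀, hz₀⟩ := exists_eq_ciSup_of_finite (f := fun z => finKL (Q z) pbar)
  have hlower := neg_mul_iSup_finKL_le_iSup_skillObjective hQ hQs hpbar hβ
  refine le_antisymm ?_ (le_ciInf hlower)
  rw [← hz₀]
  exact (ciInf_le ⟨_, Set.forall_mem_range.2 hlower⟩ _).trans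
    (iSup_skillObjective_log_div_le (hQ z₀) (hQs z₀) hpbar hβ)

end

theorem averaged_skill_minmax_general {E Z T : Type*}
    [Fintype E] [Fintype Z] [Nonempty Z] [Fintype T]
    (w : E → ℝ)
    (P : E → Z → T → ℝ) (hP : ∀ e z t, 0 < P e z t) (hPs : ∀ e z, ∑ t, P e z t = 1)
    (pbar : T → ℝ) (hpbar : ∀ t, 0 < pbar t)
    (β : ℝ) (hβ : 0 < β) :
    ∑ e, w e *
      (⨅ r : T → ℝ, ⨆ p' : {f : T → ℝ // (∀ t, 0 < f t) ∧ ∑ t, f t = 1},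
        (∑ t, (p' : T → ℝ) t * r t - (⨆ z, ∑ t, P e z t * r t)
          - β * ∑ t, (p' : T → ℝ) t * Real.log ((p' : T → ℝ) t / pbar t)))
    = -β * ∑ e, w e * ⨆ z, ∑ t, P e z t * Real.log (P e z t / pbar t) := by
  calc _ = ∑ e, w e * (-β * ⨆ z, finKL (P e z) pbar) :=
        sum_congr rfl fun e _ =>
          congrArg (w e * ·) (iInf_iSup_skillObjective (hP e) (hPs e) hpbar hβ.le)
    _ = _ := by
        rw [mul_sum]
        exact sum_congr rfl fun e _ => by unfold finKL; ring

/-- Averaged skill min–max (Eq. (7), first part): averaging the skill-based min–max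
fine-tuning objective over embodiments equals `−β` times the average over embodiments
of the maximal skill-conditioned KL divergence from the mixture `p̄`. -/
theorem averaged_skill_minmax {E Z T : Type*}
    [Fintype E] [Nonempty E] [Fintype Z] [Nonempty Z] [Fintype T] [Nonempty T]
    (w : E → ℝ) (hw : ∀ e, 0 < w e) (hws : ∑ e, w e = 1)
    (P : E → Z → T → ℝ) (hP : ∀ e z t, 0 < P e z t) (hPs : ∀ e z, ∑ t, P e z t = 1)
    (pbar : T → ℝ) (hpbar : ∀ t, 0 < pbar t) (hpbars : ∑ t, pbar t = 1)
    (β : ℝ) (hβ : 0 < β) :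
    ∑ e, w e *
      (⨅ r : T → ℝ, ⨆ p' : {f : T → ℝ // (∀ t, 0 < f t) ∧ ∑ t, f t = 1},
        (∑ t, (p' : T → ℝ) t * r t - (⨆ z, ∑ t, P e z t * r t)
          - β * ∑ t, (p' : T → ℝ) t * Real.log ((p' : T → ℝ) t / pbar t)))
    = -β * ∑ e, w e * ⨆ z, ∑ t, P e z t * Real.log (P e z t / pbar t) :=
  averaged_skill_minmax_general w P hP hPs pbar hpbar β hβ
end

section
/- Let q : ℕ → ℝ satisfy q 0 = 1/2 and q (t+1) = 1/2 − q t / 2 for all t, and let γ be a real number with 0 ≤ γ < 1. Then (1 − γ) * ∑' t, γ^t * q t = 1/(2 + γ) and (1 − γ) * ∑' t, γ^t * (1 − q t) = (1 + γ)/(2 + γ). (Computation of the discounted state distribution ρ_{2,π} of the stochastic policy under embodiment e₂ in the Appendix A.1 counterexample.) -/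
/-! The recurrence is affine with ratio `-1/2`, so `q t = 1/3 + (1/6) (-1/2)^t` (and likewise
`1 - q t = 2/3 - (1/6) (-1/2)^t`); each discounted sum is then a combination of the two geometric
series `∑ γ^t` and `∑ (-γ/2)^t`. -/

section AffineRecurrence

variable {𝕜 : Type*} {a b : 𝕜} {q : ℕ → 𝕜}

/-- The fixed point `a / (1 - b)` of `x ↦ a + b x` splits an affine recurrence into a constant and
a geometric part. -/
theorem affine_recurrence_eq [Field 𝕜] (hb : b ≠ 1) (hrec : ∀ t, q (t + 1) = a + b * q t)
    (t : ℕ) : q t = a / (1 - b) + (q 0 - a / (1 - b)) * b ^ t := by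
  have hb' : 1 - b ≠ 0 := sub_ne_zero.mpr hb.symm
  induction t with
  | zero => ring
  | succ n ih =>
    rw [hrec, ih]
    field_simp
    ring

theorem hasSum_pow_mul_affine_recurrence [NormedField 𝕜] [CompleteSpace 𝕜] {γ : 𝕜}
    (hb : b ≠ 1) (hγ : ‖γ‖ < 1) (hγb : ‖γ * b‖ < 1) (hrec : ∀ t, q (t + 1) = a + b * q t) :
    HasSum (fun t => γ ^ t * q t)
      (a / (1 - b) * (1 - γ)⁻¹ + (q 0 - a / (1 - b)) * (1 - γ * b)⁻¹) := by
  have hsplit : ∀ t, γ ^ t * q t = a / (1 - b) * γ ^ t + (q 0 - a / (1 - b)) * (γ * b) ^ t := by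
    intro t
    rw [affine_recurrence_eq hb hrec t, mul_pow]
    ring
  simp only [hsplit]
  exact ((hasSum_geometric_of_norm_lt_one hγ).mul_left _).add
    ((hasSum_geometric_of_norm_lt_one hγb).mul_left _)

end AffineRecurrence

/-- Discounted state distribution of the stochastic policy under embodiment `e₂`
in the Appendix A.1 counterexample. -/
theorem discounted_occupancy_e2 (q : ℕ → ℝ)
    (h0 : q 0 = 1 / 2) (hrec : ∀ t, q (t + 1) = 1 / 2 - q t / 2)
    (γ : ℝ) (hγ0 : 0 ≤ γ) (hγ1 : γ < 1) :
    (1 - γ) * ∑' t, γ ^ t * q t = 1 / (2 + γ) ∧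
    (1 - γ) * ∑' t, γ ^ t * (1 - q t) = (1 + γ) / (2 + γ) := by
  have hb : (-1 / 2 : ℝ) ≠ 1 := by norm_num
  have hγ : ‖γ‖ < 1 := by rw [Real.norm_of_nonneg hγ0]; exact hγ1
  have hγb : ‖γ * (-1 / 2)‖ < 1 := by
    rw [norm_mul, Real.norm_of_nonneg hγ0, norm_div, norm_neg, norm_one, Real.norm_two]
    linarith
  have hq := hasSum_pow_mul_affine_recurrence (q := q) (a := 1 / 2) hb hγ hγb
    fun t => by rw [hrec]; ring
  have hq_compl := hasSum_pow_mul_affine_recurrence (q := fun t => 1 - q t) (a := 1) hb hγ hγb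
    fun t => by simp only [hrec]; ring
  have h1γ : 1 - γ ≠ 0 := by linarith
  have h2γ : 2 + γ ≠ 0 := by linarith
  have hdenom : 1 - γ * (-1 / 2) = (2 + γ) / 2 := by ring
  rw [hq.tsum_eq, hq_compl.tsum_eq, h0, hdenom]
  constructor <;> field_simp <;> ring
end
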